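/- Let μ, ν > 0 and define Ψ₁ : ℝ → ℝ by Ψ₁(t) = (ν/(μ+ν))·e^{μt} for t ≤ 0 and Ψ₁(t) = 1 − (μ/(μ+ν))·e^{−νt} for t > 0. Define Ψ₂ by Ψ₂(t) = μν·e^{μt}·∫₀^∞∫₀^∞ Ψ₁(u − v)·e^{−μu−νv} du dv for t ≤ 0, and Ψ₂(t) = μν·e^{−νt}·∫₀^∞∫₀^∞ Ψ₁(u − v)·e^{−μu−νv} du dv + 1 − e^{−νt} for t > 0. Then Ψ₂(t) = (ν²(3μ + ν)/(μ + ν)³)·e^{μt} for t ≤ 0, and Ψ₂(t) = 1 − (μ²(μ + 3ν)/(μ + ν)³)·e^{−νt} for t > 0. -/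

import Mathlib

/-!
Since both branches of `Ψ₁` agree at `0`, for fixed `u ≥ 0` the inner integral splits at `v = u`
into an integral over `[0, u]`, where only the branch `t ≥ 0` of `Ψ₁` is seen, and a tail, where
only the branch `t ≤ 0` is seen. Both are elementary, and the inner integral is a combination of
`e^{-μu}`, `e^{-(μ+ν)u}` and `u e^{-(μ+ν)u}`, whose integrals over `(0, ∞)` are `1/μ`, `1/(μ+ν)`
and `1/(μ+ν)²`. This gives `μν ∫∫ = ν²(3μ+ν)/(μ+ν)³`, and the case `t > 0` follows because
`ν²(3μ+ν) + μ²(μ+3ν) = (μ+ν)³`.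
-/

open MeasureTheory Set Real

section ExpIntegrals

variable {b : ℝ}

lemma integral_exp_neg_mul_Ioi (hb : 0 < b) (c : ℝ) :
    ∫ x in Ioi c, exp (-b * x) = exp (-b * c) / b := by
  rw [integral_exp_mul_Ioi (neg_neg_of_pos hb), div_neg, neg_div, neg_neg]

lemma intervalIntegral_exp_neg_mul (hb : 0 < b) (c d : ℝ) :
    ∫ x in c..d, exp (-b * x) = (exp (-b * c) - exp (-b * d)) / b := by
  rw [eq_sub_of_add_eq (intervalIntegral.integral_interval_add_Ioi
      (exp_neg_integrableOn_Ioi c hb) (exp_neg_integrableOn_Ioi d hb)),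
    integral_exp_neg_mul_Ioi hb, integral_exp_neg_mul_Ioi hb, sub_div]

lemma integrableOn_mul_exp_neg_mul_Ioi (hb : 0 < b) :
    IntegrableOn (fun x ↦ x * exp (-b * x)) (Ioi 0) :=
  (integrableOn_rpow_mul_exp_neg_mul_rpow (s := 1) (p := 1) (by norm_num) one_pos hb).congr_fun
    (fun x _ ↦ by simp) measurableSet_Ioi

lemma integral_mul_exp_neg_mul_Ioi (hb : 0 < b) :
    ∫ x in Ioi 0, x * exp (-b * x) = 1 / b ^ 2 := by
  have h := integral_rpow_mul_exp_neg_mul_Ioi two_pos hb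
  norm_num [Real.Gamma_two] at h
  simpa [neg_mul] using h

end ExpIntegrals

section RecursionIntegral

variable {μ ν : ℝ} {Ψ : ℝ → ℝ}

lemma integral_Ioi_comp_sub_left_mul_exp (hμ : 0 < μ) (hν : 0 < ν)
    (hΨ_nonpos : ∀ t ≤ 0, Ψ t = ν / (μ + ν) * exp (μ * t))
    (hΨ_nonneg : ∀ t, 0 ≤ t → Ψ t = 1 - μ / (μ + ν) * exp (-ν * t)) {u : ℝ} (hu : 0 ≤ u) :
    ∫ v in Ioi 0, Ψ (u - v) * exp (-μ * u - ν * v) =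
      exp (-μ * u) / ν + (ν / (μ + ν) ^ 2 - 1 / ν) * exp (-(μ + ν) * u)
        - μ / (μ + ν) * (u * exp (-(μ + ν) * u)) := by
  have hμν : 0 < μ + ν := by positivity
  have head : EqOn (fun v ↦ Ψ (u - v) * exp (-μ * u - ν * v))
      (fun v ↦ exp (-μ * u) * exp (-ν * v) - μ / (μ + ν) * exp (-(μ + ν) * u)) (uIcc 0 u) := by
    intro v hv
    rw [uIcc_of_le hu] at hv
    have e₁ : exp (-ν * (u - v)) * exp (-μ * u - ν * v) = exp (-(μ + ν) * u) := by
      rw [← exp_add]; ring_nf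
    have e₂ : exp (-μ * u - ν * v) = exp (-μ * u) * exp (-ν * v) := by
      rw [← exp_add]; ring_nf
    dsimp only
    rw [hΨ_nonneg _ (sub_nonneg.2 hv.2)]
    linear_combination e₂ - μ / (μ + ν) * e₁
  have tail : EqOn (fun v ↦ Ψ (u - v) * exp (-μ * u - ν * v))
      (fun v ↦ ν / (μ + ν) * exp (-(μ + ν) * v)) (Ioi u) := by
    intro v hv
    dsimp only
    rw [hΨ_nonpos _ (sub_nonpos.2 (le_of_lt hv)), mul_assoc, ← exp_add]
    ring_nf
  have head_cont : Continuous
      (fun v ↦ exp (-μ * u) * exp (-ν * v) - μ / (μ + ν) * exp (-(μ + ν) * u)) := by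
    fun_prop
  have tail_int : IntegrableOn (fun v ↦ ν / (μ + ν) * exp (-(μ + ν) * v)) (Ioi u) :=
    (exp_neg_integrableOn_Ioi u hμν).const_mul _
  rw [← intervalIntegral.integral_interval_add_Ioi'
      ((head_cont.continuousOn.congr head).intervalIntegrable)
      (tail_int.congr_fun tail.symm measurableSet_Ioi),
    intervalIntegral.integral_congr head, setIntegral_congr_fun measurableSet_Ioi tail,
    intervalIntegral.integral_sub (Continuous.intervalIntegrable (by fun_prop) _ _)
      intervalIntegrable_const,
    intervalIntegral.integral_const_mul, intervalIntegral_exp_neg_mul hν,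
    intervalIntegral.integral_const, integral_const_mul, integral_exp_neg_mul_Ioi hμν]
  have e : exp (-μ * u) * exp (-ν * u) = exp (-(μ + ν) * u) := by rw [← exp_add]; ring_nf
  simp only [mul_zero, exp_zero, sub_zero, smul_eq_mul]
  rw [← e]
  field_simp
  ring

lemma mul_integral_Ioi_integral_Ioi_comp_sub_left_mul_exp (hμ : 0 < μ) (hν : 0 < ν)
    (hΨ_nonpos : ∀ t ≤ 0, Ψ t = ν / (μ + ν) * exp (μ * t))
    (hΨ_nonneg : ∀ t, 0 ≤ t → Ψ t = 1 - μ / (μ + ν) * exp (-ν * t)) :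
    μ * ν * ∫ u in Ioi 0, ∫ v in Ioi 0, Ψ (u - v) * exp (-μ * u - ν * v) =
      ν ^ 2 * (3 * μ + ν) / (μ + ν) ^ 3 := by
  have hμν : 0 < μ + ν := by positivity
  have h₁ : IntegrableOn (fun u ↦ exp (-μ * u) / ν) (Ioi 0) :=
    (exp_neg_integrableOn_Ioi 0 hμ).div_const _
  have h₂ : IntegrableOn (fun u ↦ (ν / (μ + ν) ^ 2 - 1 / ν) * exp (-(μ + ν) * u)) (Ioi 0) :=
    (exp_neg_integrableOn_Ioi 0 hμν).const_mul _
  have h₃ : IntegrableOn (fun u ↦ μ / (μ + ν) * (u * exp (-(μ + ν) * u))) (Ioi 0) :=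
    (integrableOn_mul_exp_neg_mul_Ioi hμν).const_mul _
  rw [setIntegral_congr_fun measurableSet_Ioi fun u hu ↦
      integral_Ioi_comp_sub_left_mul_exp hμ hν hΨ_nonpos hΨ_nonneg (le_of_lt hu),
    integral_sub (h₁.fun_add h₂) h₃, integral_add h₁ h₂, integral_div, integral_const_mul,
    integral_const_mul, integral_exp_neg_mul_Ioi hμ, integral_exp_neg_mul_Ioi hμν,
    integral_mul_exp_neg_mul_Ioi hμν]
  simp only [mul_zero, exp_zero]
  field_simp
  ring

end RecursionIntegral

/-- The second distribution function `Ψ₂`, obtained from `Ψ₁` by the one-step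
recursion, has the closed form `Ψ₂(t) = (ν²(3μ+ν)/(μ+ν)³)·e^{μt}` for `t ≤ 0` and
`Ψ₂(t) = 1 - (μ²(μ+3ν)/(μ+ν)³)·e^{-νt}` for `t > 0`. -/
theorem psi_two_closed_form (μ ν : ℝ) (hμ : 0 < μ) (hν : 0 < ν)
    (Ψ₁ Ψ₂ : ℝ → ℝ)
    (hΨ₁ : ∀ t : ℝ, Ψ₁ t = if t ≤ 0 then ν/(μ+ν) * Real.exp (μ*t)
      else 1 - μ/(μ+ν) * Real.exp (-ν*t))
    (hΨ₂ : ∀ t : ℝ, Ψ₂ t =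
      if t ≤ 0 then
        μ * ν * Real.exp (μ*t) *
          ∫ u in Set.Ioi (0:ℝ), ∫ v in Set.Ioi (0:ℝ), Ψ₁ (u - v) * Real.exp (-μ*u - ν*v)
      else
        μ * ν * Real.exp (-ν*t) *
          (∫ u in Set.Ioi (0:ℝ), ∫ v in Set.Ioi (0:ℝ), Ψ₁ (u - v) * Real.exp (-μ*u - ν*v))
          + 1 - Real.exp (-ν*t)) :
    (∀ t : ℝ, t ≤ 0 → Ψ₂ t = ν^2*(3*μ+ν)/(μ+ν)^3 * Real.exp (μ*t)) ∧
    (∀ t : ℝ, 0 < t → Ψ₂ t = 1 - μ^2*(μ+3*ν)/(μ+ν)^3 * Real.exp (-ν*t)) := by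
  have hΨ₁_nonpos : ∀ t ≤ 0, Ψ₁ t = ν / (μ + ν) * exp (μ * t) := fun t ht ↦ by
    rw [hΨ₁, if_pos ht]
  have hΨ₁_nonneg : ∀ t, 0 ≤ t → Ψ₁ t = 1 - μ / (μ + ν) * exp (-ν * t) := fun t ht ↦ by
    rcases ht.eq_or_lt with rfl | ht
    · rw [hΨ₁, if_pos le_rfl, mul_zero, mul_zero, exp_zero]
      field_simp
      ring
    · rw [hΨ₁, if_neg (not_le.2 ht)]
  have hI := mul_integral_Ioi_integral_Ioi_comp_sub_left_mul_exp hμ hν hΨ₁_nonpos hΨ₁_nonneg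
  have hmass : ν ^ 2 * (3 * μ + ν) / (μ + ν) ^ 3 = 1 - μ ^ 2 * (μ + 3 * ν) / (μ + ν) ^ 3 := by
    field_simp
    ring
  constructor
  · intro t ht
    rw [hΨ₂, if_pos ht]
    linear_combination exp (μ * t) * hI
  · intro t ht
    rw [hΨ₂, if_neg (not_le.2 ht)]
    linear_combination exp (-ν * t) * (hI.trans hmass)
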